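/- Let H be a real Hilbert space, T : H → H a bounded self-adjoint operator, and x, y ∈ H. Let κ be a finite compactly supported Borel measure on ℝ and let f, g ∈ L¹(κ) be nonnegative functions such that for every integer k ≥ 0 one has ⟪T^k x, x⟫ = ∫ t^k f(t) dκ(t) and ⟪T^k y, y⟫ = ∫ t^k g(t) dκ(t). Then |⟪x, y⟫| ≤ ∫ √(f(t)·g(t)) dκ(t). -/

import Mathlib

/-!
For polynomials `p, q`, writing `x = (1 - pq)(T) x + q(T) p(T) x` and moving the self-adjoint
`q(T)` across the inner product gives `|⟪x, y⟫| ≤ ‖(1 - pq)(T) x‖ ‖y‖ + ‖p(T) x‖ ‖q(T) y‖`,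
and the moment identities turn each `‖r(T) z‖²` into `∫ r² f dκ`. Choosing `p ≈ √v`, `q ≈ 1/√v`
uniformly on `[-R, R]` (Weierstrass) yields `|⟪x, y⟫| ≤ (∫ v f dκ)^½ (∫ v⁻¹ g dκ)^½` for every
continuous `v > 0`, and then, by a.e. approximation and dominated convergence, for every
measurable `v` with values in a compact subinterval of `(0, ∞)`. Finally the weight `v ≈ √(g/f)`,
regularised and truncated, makes both integrals converge to `∫ √(f g) dκ`.
-/

open MeasureTheory RealInnerProductSpace Polynomial Filter Topology Set

theorem IsSelfAdjoint.aeval {R A : Type*} [CommSemiring R] [StarRing R] [TrivialStar R]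
    [Semiring A] [StarRing A] [Algebra R A] [StarModule R A] {a : A} (ha : IsSelfAdjoint a)
    (p : R[X]) : IsSelfAdjoint (Polynomial.aeval a p) := by
  induction p using Polynomial.induction_on' with
  | add p q hp hq => rw [map_add]; exact hp.add hq
  | monomial n c =>
      rw [aeval_monomial, Algebra.algebraMap_eq_smul_one, smul_mul_assoc, one_mul]
      exact (IsSelfAdjoint.all c).smul (ha.pow n)

section Operator

variable {H : Type*} [NormedAddCommGroup H] [InnerProductSpace ℝ H] {T : H →L[ℝ] H} {z : H}
  {κ : Measure ℝ} {f : ℝ → ℝ}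

theorem inner_aeval_apply_self_eq_integral
    (hf : ∀ r : ℝ[X], Integrable (fun t => r.eval t * f t) κ)
    (hz : ∀ k : ℕ, ⟪(T ^ k) z, z⟫ = ∫ t, t ^ k * f t ∂κ) (r : ℝ[X]) :
    ⟪aeval T r z, z⟫ = ∫ t, r.eval t * f t ∂κ := by
  induction r using Polynomial.induction_on' with
  | add p q hp hq =>
      simp only [map_add, add_apply, inner_add_left, hp, hq, eval_add,
        add_mul, integral_add (hf p) (hf q)]
  | monomial n a =>
      simp only [aeval_monomial, eval_monomial, Algebra.algebraMap_eq_smul_one, smul_mul_assoc,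
        one_mul, smul_apply, real_inner_smul_left, hz n, mul_assoc,
        integral_const_mul]

variable [CompleteSpace H]

theorem abs_inner_le_norm_aeval_add (hT : IsSelfAdjoint T) (p q : ℝ[X]) (x y : H) :
    |⟪x, y⟫| ≤ ‖aeval T (1 - p * q) x‖ * ‖y‖ + ‖aeval T p x‖ * ‖aeval T q y‖ := by
  have hsplit : x = aeval T (1 - p * q) x + aeval T q (aeval T p x) := by
    rw [mul_comm, map_sub, map_mul, map_one]; simp
  have hmove : ⟪aeval T q (aeval T p x), y⟫ = ⟪aeval T p x, aeval T q y⟫ :=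
    (hT.aeval q).isSymmetric _ _
  calc |⟪x, y⟫| = |⟪aeval T (1 - p * q) x, y⟫ + ⟪aeval T p x, aeval T q y⟫| := by
        rw [← hmove, ← inner_add_left, ← hsplit]
    _ ≤ _ := (abs_add_le _ _).trans
        (add_le_add (abs_real_inner_le_norm _ _) (abs_real_inner_le_norm _ _))

theorem norm_aeval_apply_eq_sqrt_integral (hT : IsSelfAdjoint T)
    (hf : ∀ r : ℝ[X], Integrable (fun t => r.eval t * f t) κ)
    (hz : ∀ k : ℕ, ⟪(T ^ k) z, z⟫ = ∫ t, t ^ k * f t ∂κ) (r : ℝ[X]) :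
    ‖aeval T r z‖ = √(∫ t, r.eval t ^ 2 * f t ∂κ) := by
  have hsymm : ⟪aeval T r (aeval T r z), z⟫ = ⟪aeval T r z, aeval T r z⟫ :=
    (hT.aeval r).isSymmetric _ _
  rw [← Real.sqrt_sq (norm_nonneg (aeval T r z)), ← real_inner_self_eq_norm_sq, ← hsymm,
    ← mul_apply_eq_comp, ← map_mul, inner_aeval_apply_self_eq_integral hf hz]
  simp only [eval_mul, pow_two]

end Operator

theorem tendsto_integral_mul_of_bounded {α ι : Type*} [MeasurableSpace α] {μ : Measure α}
    {l : Filter ι} [l.IsCountablyGenerated] {F : ι → α → ℝ} {φ f : α → ℝ} (hf : Integrable f μ)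
    (hF : ∀ i, AEStronglyMeasurable (F i) μ) {B : ℝ} (hB : ∀ i, ∀ᵐ t ∂μ, |F i t| ≤ B)
    (hlim : ∀ᵐ t ∂μ, Tendsto (F · t) l (𝓝 (φ t))) :
    Tendsto (fun i => ∫ t, F i t * f t ∂μ) l (𝓝 (∫ t, φ t * f t ∂μ)) := by
  refine tendsto_integral_filter_of_dominated_convergence (fun t => B * ‖f t‖)
    (.of_forall fun i => (hF i).mul hf.aestronglyMeasurable) (.of_forall fun i => ?_)
    (hf.norm.const_mul B) (hlim.mono fun t ht => ht.mul_const (f t))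
  filter_upwards [hB i] with t ht
  rw [norm_mul, Real.norm_eq_abs]
  exact mul_le_mul_of_nonneg_right ht (norm_nonneg _)

theorem exists_seq_polynomial_tendsto_of_continuousOn {a b : ℝ} {u : ℝ → ℝ}
    (hu : ContinuousOn u (Icc a b)) :
    ∃ (p : ℕ → ℝ[X]) (B : ℝ), (∀ n, ∀ t ∈ Icc a b, |(p n).eval t| ≤ B) ∧
      ∀ t ∈ Icc a b, Tendsto (fun n => (p n).eval t) atTop (𝓝 (u t)) := by
  choose p hp using fun n : ℕ =>
    exists_polynomial_near_of_continuousOn a b u hu (1 / (n + 1)) Nat.one_div_pos_of_nat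
  obtain ⟨B, hB⟩ := isCompact_Icc.exists_bound_of_continuousOn hu
  refine ⟨p, B + 1, fun n t ht => ?_, fun t ht => ?_⟩
  · have hn : 1 / ((n : ℝ) + 1) ≤ 1 := by
      rw [div_le_one (Nat.cast_add_one_pos n)]; linarith [n.cast_nonneg (α := ℝ)]
    have hut := hB t ht
    rw [Real.norm_eq_abs] at hut
    linarith [abs_sub_abs_le_abs_sub ((p n).eval t) (u t), hp n t ht]
  · rw [tendsto_iff_norm_sub_tendsto_zero]
    exact squeeze_zero (fun n => norm_nonneg _) (fun n => (hp n t ht).le)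
      tendsto_one_div_add_atTop_nhds_zero_nat

section CompactSupport

variable {κ : Measure ℝ} {a b : ℝ} {f : ℝ → ℝ}

theorem Polynomial.integrable_eval_mul (hκ : κ (Icc a b)ᶜ = 0) (hf : Integrable f κ) (r : ℝ[X]) :
    Integrable (fun t => r.eval t * f t) κ := by
  obtain ⟨B, hB⟩ := (isCompact_Icc (a := a) (b := b)).exists_bound_of_continuousOn
    r.continuous.continuousOn
  have hIcc : ∀ᵐ t ∂κ, t ∈ Icc a b := mem_ae_iff.2 hκ
  exact hf.bdd_mul r.continuous.aestronglyMeasurable (hIcc.mono hB)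

theorem tendsto_integral_eval_sq_mul (hκ : κ (Icc a b)ᶜ = 0) (hf : Integrable f κ)
    {p : ℕ → ℝ[X]} {u : ℝ → ℝ} {B : ℝ}
    (hpB : ∀ n, ∀ t ∈ Icc a b, |(p n).eval t| ≤ B)
    (hp : ∀ t ∈ Icc a b, Tendsto (fun n => (p n).eval t) atTop (𝓝 (u t))) :
    Tendsto (fun n => ∫ t, (p n).eval t ^ 2 * f t ∂κ) atTop (𝓝 (∫ t, u t ^ 2 * f t ∂κ)) := by
  have hIcc : ∀ᵐ t ∂κ, t ∈ Icc a b := mem_ae_iff.2 hκ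
  refine tendsto_integral_mul_of_bounded hf
    (fun n => ((p n).continuous.pow 2).aestronglyMeasurable) (B := B ^ 2)
    (fun n => hIcc.mono fun t ht => ?_) (hIcc.mono fun t ht => (hp t ht).pow 2)
  rw [abs_pow]
  exact pow_le_pow_left₀ (abs_nonneg _) (hpB n t ht) 2

end CompactSupport

theorem Integrable.exists_seq_continuous_tendsto_ae {α : Type*} [TopologicalSpace α]
    [NormalSpace α] [MeasurableSpace α] [BorelSpace α] {μ : Measure α} [μ.WeaklyRegular]
    {w : α → ℝ} (hw : Integrable w μ) :
    ∃ v : ℕ → α → ℝ, (∀ n, Continuous (v n)) ∧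
      ∀ᵐ t ∂μ, Tendsto (fun n => v n t) atTop (𝓝 (w t)) := by
  choose v hv using fun n : ℕ =>
    (memLp_one_iff_integrable.2 hw).exists_boundedContinuous_eLpNorm_sub_le ENNReal.one_ne_top
      (ENNReal.inv_ne_zero.2 (ENNReal.natCast_ne_top n))
  have hconv : TendstoInMeasure μ (fun n => (v n : α → ℝ)) atTop w := by
    refine tendstoInMeasure_of_tendsto_eLpNorm one_ne_zero
      (fun n => (v n).continuous.aestronglyMeasurable) hw.aestronglyMeasurable ?_
    refine tendsto_of_tendsto_of_tendsto_of_le_of_le tendsto_const_nhds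
      ENNReal.tendsto_inv_nat_nhds_zero (fun n => zero_le) fun n => ?_
    rw [eLpNorm_sub_comm]
    exact (hv n).1
  obtain ⟨ns, -, hns⟩ := hconv.exists_seq_tendsto_ae
  exact ⟨fun n => v (ns n), fun n => (v (ns n)).continuous, hns⟩

section Inequality

variable {H : Type*} [NormedAddCommGroup H] [InnerProductSpace ℝ H] [CompleteSpace H]
  {T : H →L[ℝ] H} {x y : H} {κ : Measure ℝ} {a b : ℝ} {f g : ℝ → ℝ}

theorem abs_inner_le_of_continuous (hT : IsSelfAdjoint T) (hκ : κ (Icc a b)ᶜ = 0)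
    (hf : Integrable f κ) (hg : Integrable g κ)
    (hx : ∀ k : ℕ, ⟪(T ^ k) x, x⟫ = ∫ t, t ^ k * f t ∂κ)
    (hy : ∀ k : ℕ, ⟪(T ^ k) y, y⟫ = ∫ t, t ^ k * g t ∂κ)
    {v : ℝ → ℝ} (hv : Continuous v) (hv0 : ∀ t, 0 < v t) :
    |⟪x, y⟫| ≤ √(∫ t, v t * f t ∂κ) * √(∫ t, (v t)⁻¹ * g t ∂κ) := by
  have hsqrt_ne : ∀ t, √(v t) ≠ 0 := fun t => (Real.sqrt_pos.2 (hv0 t)).ne'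
  obtain ⟨p, B, hpB, hp⟩ := exists_seq_polynomial_tendsto_of_continuousOn (a := a) (b := b)
    (u := fun t => √(v t)) hv.sqrt.continuousOn
  obtain ⟨q, B', hqB, hq⟩ := exists_seq_polynomial_tendsto_of_continuousOn (a := a) (b := b)
    (u := fun t => (√(v t))⁻¹) (hv.sqrt.inv₀ hsqrt_ne).continuousOn
  have hle : ∀ n, |⟪x, y⟫| ≤ √(∫ t, (1 - p n * q n).eval t ^ 2 * f t ∂κ) * ‖y‖ +
      √(∫ t, (p n).eval t ^ 2 * f t ∂κ) * √(∫ t, (q n).eval t ^ 2 * g t ∂κ) := fun n => by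
    simpa only [norm_aeval_apply_eq_sqrt_integral hT (integrable_eval_mul hκ hf) hx,
      norm_aeval_apply_eq_sqrt_integral hT (integrable_eval_mul hκ hg) hy]
      using abs_inner_le_norm_aeval_add hT (p n) (q n) x y
  have hdefect : ∀ n, ∀ t ∈ Icc a b, |(1 - p n * q n).eval t| ≤ 1 + B * B' := fun n t ht => by
    have hB0 : 0 ≤ B := (abs_nonneg _).trans (hpB n t ht)
    rw [eval_sub, eval_one, eval_mul]
    refine (abs_sub _ _).trans ?_
    rw [abs_one, abs_mul]
    gcongr
    exacts [hpB n t ht, hqB n t ht]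
  have hdefect_lim : ∀ t ∈ Icc a b,
      Tendsto (fun n => (1 - p n * q n).eval t) atTop (𝓝 0) := fun t ht => by
    simpa [mul_inv_cancel₀ (hsqrt_ne t)] using
      (tendsto_const_nhds (x := (1 : ℝ))).sub ((hp t ht).mul (hq t ht))
  have hA := tendsto_integral_eval_sq_mul (u := fun _ => 0) hκ hf hdefect hdefect_lim
  have hP := tendsto_integral_eval_sq_mul hκ hf hpB hp
  have hQ := tendsto_integral_eval_sq_mul hκ hg hqB hq
  simpa [Real.sq_sqrt (hv0 _).le] using
    ge_of_tendsto' ((hA.sqrt.mul_const ‖y‖).add (hP.sqrt.mul hQ.sqrt)) hle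

theorem abs_inner_le_of_bounded [IsFiniteMeasure κ] (hT : IsSelfAdjoint T)
    (hκ : κ (Icc a b)ᶜ = 0) (hf : Integrable f κ) (hg : Integrable g κ)
    (hx : ∀ k : ℕ, ⟪(T ^ k) x, x⟫ = ∫ t, t ^ k * f t ∂κ)
    (hy : ∀ k : ℕ, ⟪(T ^ k) y, y⟫ = ∫ t, t ^ k * g t ∂κ)
    {w : ℝ → ℝ} (hw : AEStronglyMeasurable w κ) {c C : ℝ} (hc : 0 < c)
    (hwc : ∀ t, w t ∈ Icc c C) :
    |⟪x, y⟫| ≤ √(∫ t, w t * f t ∂κ) * √(∫ t, (w t)⁻¹ * g t ∂κ) := by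
  have hcC : c ≤ C := (hwc 0).1.trans (hwc 0).2
  have hwint : Integrable w κ := .of_bound hw C (.of_forall fun t => by
    rw [Real.norm_eq_abs, abs_le]; constructor <;> linarith [(hwc t).1, (hwc t).2])
  obtain ⟨v, hv, hvw⟩ := Integrable.exists_seq_continuous_tendsto_ae hwint
  set v' : ℕ → ℝ → ℝ := fun n t => max c (min C (v n t))
  have hv' : ∀ n, Continuous (v' n) := fun n => continuous_const.max (continuous_const.min (hv n))
  have hv'c : ∀ n t, v' n t ∈ Icc c C := fun n t => ⟨le_max_left _ _, max_le hcC (min_le_left _ _)⟩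
  have hv'0 : ∀ n t, 0 < v' n t := fun n t => hc.trans_le (hv'c n t).1
  have hlim : ∀ᵐ t ∂κ, Tendsto (v' · t) atTop (𝓝 (w t)) := hvw.mono fun t ht => by
    simpa [(hwc t).1, (hwc t).2] using
      (tendsto_const_nhds (x := c)).max ((tendsto_const_nhds (x := C)).min ht)
  have hF := tendsto_integral_mul_of_bounded hf (fun n => (hv' n).aestronglyMeasurable) (B := C)
    (fun n => .of_forall fun t => by
      rw [abs_of_pos (hv'0 n t)]; exact (hv'c n t).2) hlim
  have hG := tendsto_integral_mul_of_bounded hg (fun n => ((hv' n).inv₀ fun t =>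
    (hv'0 n t).ne').aestronglyMeasurable) (B := c⁻¹)
    (fun n => .of_forall fun t => by
      rw [Pi.inv_apply, abs_of_pos (inv_pos.2 (hv'0 n t))]; exact inv_anti₀ hc (hv'c n t).1)
    (hlim.mono fun t ht => ht.inv₀ (hc.trans_le (hwc t).1).ne')
  exact ge_of_tendsto' (hF.sqrt.mul hG.sqrt) fun n =>
    abs_inner_le_of_continuous hT hκ hf hg hx hy (hv' n) (hv'0 n)

end Inequality

theorem inv_max_min_inv {δ a : ℝ} (hδ : 0 < δ) (hδ1 : δ ≤ 1) (ha : 0 < a) :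
    (max δ (min δ⁻¹ a))⁻¹ = max δ (min δ⁻¹ a⁻¹) := by
  have hδδ : δ ≤ δ⁻¹ := hδ1.trans (one_le_inv₀ hδ |>.2 hδ1)
  rcases le_total a δ with h | h
  · have h' : δ⁻¹ ≤ a⁻¹ := inv_anti₀ ha h
    rw [min_eq_right (h.trans hδδ), max_eq_left h, min_eq_left h', max_eq_right hδδ]
  rcases le_total a δ⁻¹ with h' | h'
  · have h₁ : a⁻¹ ≤ δ⁻¹ := inv_anti₀ hδ h
    have h₂ : δ ≤ a⁻¹ := by simpa using inv_anti₀ ha h'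
    rw [min_eq_right h', max_eq_right h, min_eq_right h₁, max_eq_right h₂]
  · have h₂ : a⁻¹ ≤ δ := by simpa using inv_anti₀ (inv_pos.2 hδ) h'
    rw [min_eq_left h', max_eq_right hδδ, inv_inv, min_eq_right (h₂.trans hδδ), max_eq_left h₂]

theorem tendsto_max_min_inv {a : ℝ → ℝ} {L : ℝ} (ha : Tendsto a (𝓝[>] 0) (𝓝 L)) (hL : 0 ≤ L) :
    Tendsto (fun δ => max δ (min δ⁻¹ (a δ))) (𝓝[>] 0) (𝓝 L) := by
  have hmin : (fun δ => min δ⁻¹ (a δ)) =ᶠ[𝓝[>] 0] a := by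
    filter_upwards [ha.eventually (gt_mem_nhds (lt_add_one L)),
      tendsto_inv_nhdsGT_zero.eventually (eventually_ge_atTop (L + 1))] with δ h₁ h₂
    exact min_eq_right (by linarith)
  simpa [hL] using (tendsto_nhdsWithin_of_tendsto_nhds tendsto_id).max (ha.congr' hmin.symm)

theorem Real.sqrt_div_mul_self {u : ℝ} (hu : 0 < u) (v : ℝ) : √(v / u) * u = √(u * v) := by
  rw [← Real.sqrt_sq hu.le, ← Real.sqrt_mul' _ (sq_nonneg _), Real.sqrt_sq hu.le]
  congr 1
  field_simp

/-- `√(v / u)` is the weight `w` with `w * u = w⁻¹ * v = √(u v)`; it is regularised by `δ` and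
truncated to `[δ, δ⁻¹]` so that it is bounded away from `0` and `∞`. -/
noncomputable def balancingWeight (δ u v : ℝ) : ℝ := max δ (min δ⁻¹ √((v + δ) / (u + δ)))

theorem balancingWeight_mem_Icc {δ : ℝ} (hδ : 0 < δ) (hδ1 : δ ≤ 1) (u v : ℝ) :
    balancingWeight δ u v ∈ Icc δ δ⁻¹ :=
  ⟨le_max_left _ _, max_le (hδ1.trans (one_le_inv₀ hδ |>.2 hδ1)) (min_le_left _ _)⟩

theorem balancingWeight_inv {δ u v : ℝ} (hδ : 0 < δ) (hδ1 : δ ≤ 1) (hu : 0 ≤ u) (hv : 0 ≤ v) :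
    (balancingWeight δ u v)⁻¹ = balancingWeight δ v u := by
  rw [balancingWeight, inv_max_min_inv hδ hδ1 (Real.sqrt_pos.2 (by positivity)), ← Real.sqrt_inv,
    inv_div, balancingWeight]

theorem balancingWeight_mul_le {δ u v : ℝ} (hδ : 0 < δ) (hδ1 : δ ≤ 1) (hu : 0 ≤ u) (hv : 0 ≤ v) :
    balancingWeight δ u v * u ≤ u + (u + v + 2) / 2 := by
  set a := √((v + δ) / (u + δ))
  have ha : 0 ≤ a := Real.sqrt_nonneg _
  have hw : balancingWeight δ u v ≤ 1 + a :=
    max_le (by linarith) ((min_le_right _ _).trans (by linarith))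
  have hau : a * u ≤ √((u + δ) * (v + δ)) := by
    rw [← Real.sqrt_div_mul_self (by positivity : 0 < u + δ)]
    gcongr; linarith
  have hamgm : √((u + δ) * (v + δ)) ≤ (u + v + 2) / 2 := by
    rw [Real.sqrt_le_left (by positivity)]
    nlinarith [sq_nonneg (u - v)]
  nlinarith

theorem tendsto_balancingWeight_mul {u : ℝ} (hu : 0 ≤ u) (v : ℝ) :
    Tendsto (fun δ => balancingWeight δ u v * u) (𝓝[>] 0) (𝓝 √(u * v)) := by
  rcases hu.eq_or_lt with rfl | hu
  · simp
  have hratio : Tendsto (fun δ => √((v + δ) / (u + δ))) (𝓝[>] 0) (𝓝 √(v / u)) := by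
    have h : Tendsto (fun δ => (v + δ) / (u + δ)) (𝓝 0) (𝓝 ((v + 0) / (u + 0))) :=
      (tendsto_const_nhds.add tendsto_id).div (tendsto_const_nhds.add tendsto_id)
        (by simpa using hu.ne')
    simpa using h.sqrt.mono_left nhdsWithin_le_nhds
  rw [← Real.sqrt_div_mul_self hu]
  unfold balancingWeight
  exact (tendsto_max_min_inv hratio (Real.sqrt_nonneg _)).mul_const u

section Integral

variable {α : Type*} [MeasurableSpace α] {μ : Measure α} {f g : α → ℝ}

theorem aestronglyMeasurable_balancingWeight (hf : AEStronglyMeasurable f μ)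
    (hg : AEStronglyMeasurable g μ) (δ : ℝ) :
    AEStronglyMeasurable (fun t => balancingWeight δ (f t) (g t)) μ := by
  have := hf.aemeasurable
  have := hg.aemeasurable
  unfold balancingWeight
  exact AEMeasurable.aestronglyMeasurable (by fun_prop)

variable [IsFiniteMeasure μ]

theorem tendsto_integral_balancingWeight_mul (hf0 : ∀ t, 0 ≤ f t) (hg0 : ∀ t, 0 ≤ g t)
    (hf : Integrable f μ) (hg : Integrable g μ) :
    Tendsto (fun δ => ∫ t, balancingWeight δ (f t) (g t) * f t ∂μ) (𝓝[>] 0)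
      (𝓝 (∫ t, √(f t * g t) ∂μ)) := by
  refine tendsto_integral_filter_of_dominated_convergence (fun t => f t + (f t + g t + 2) / 2)
    (.of_forall fun δ => (aestronglyMeasurable_balancingWeight hf.1 hg.1 δ).mul hf.1) ?_
    (hf.add (((hf.add hg).add (integrable_const 2)).div_const 2))
    (.of_forall fun t => tendsto_balancingWeight_mul (hf0 t) (g t))
  filter_upwards [Ioc_mem_nhdsGT one_pos] with δ hδ
  refine .of_forall fun t => ?_
  rw [Real.norm_of_nonneg (mul_nonneg (hδ.1.le.trans (balancingWeight_mem_Icc hδ.1 hδ.2 _ _).1)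
    (hf0 t))]
  exact balancingWeight_mul_le hδ.1 hδ.2 (hf0 t) (hg0 t)

theorem tendsto_sqrt_integral_mul_sqrt_integral_balancingWeight (hf0 : ∀ t, 0 ≤ f t)
    (hg0 : ∀ t, 0 ≤ g t) (hf : Integrable f μ) (hg : Integrable g μ) :
    Tendsto (fun δ => √(∫ t, balancingWeight δ (f t) (g t) * f t ∂μ) *
      √(∫ t, (balancingWeight δ (f t) (g t))⁻¹ * g t ∂μ)) (𝓝[>] 0)
      (𝓝 (∫ t, √(f t * g t) ∂μ)) := by
  have hF := tendsto_integral_balancingWeight_mul hf0 hg0 hf hg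
  have hG : Tendsto (fun δ => ∫ t, (balancingWeight δ (f t) (g t))⁻¹ * g t ∂μ) (𝓝[>] 0)
      (𝓝 (∫ t, √(f t * g t) ∂μ)) := by
    simp_rw [mul_comm (f _) (g _)]
    refine (tendsto_integral_balancingWeight_mul hg0 hf0 hg hf).congr' ?_
    filter_upwards [Ioc_mem_nhdsGT one_pos] with δ hδ
    simp_rw [balancingWeight_inv hδ.1 hδ.2 (hf0 _) (hg0 _)]
  simpa [Real.mul_self_sqrt (integral_nonneg fun t => Real.sqrt_nonneg _)] using
    hF.sqrt.mul hG.sqrt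

end Integral

/-- Lemma 3.2 (Hilbert-space form): if the spectral measures of the bounded self-adjoint
operator `T` at `x` and at `y` have densities `f`, `g` with respect to a common finite
compactly supported measure `κ`, then `|⟪x, y⟫| ≤ ∫ √(f g) dκ`. -/
theorem stmt2 {H : Type*} [NormedAddCommGroup H] [InnerProductSpace ℝ H] [CompleteSpace H]
    (T : H →L[ℝ] H) (hT : IsSelfAdjoint T) (x y : H)
    (κ : Measure ℝ) [IsFiniteMeasure κ]
    (R : ℝ) (hκsupp : κ (Set.Icc (-R) R)ᶜ = 0)
    (f g : ℝ → ℝ) (hf0 : ∀ t, 0 ≤ f t) (hg0 : ∀ t, 0 ≤ g t)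
    (hfint : Integrable f κ) (hgint : Integrable g κ)
    (hx : ∀ k : ℕ, ⟪(T ^ k) x, x⟫ = ∫ t, t ^ k * f t ∂κ)
    (hy : ∀ k : ℕ, ⟪(T ^ k) y, y⟫ = ∫ t, t ^ k * g t ∂κ) :
    |⟪x, y⟫| ≤ ∫ t, Real.sqrt (f t * g t) ∂κ := by
  refine ge_of_tendsto
    (tendsto_sqrt_integral_mul_sqrt_integral_balancingWeight hf0 hg0 hfint hgint) ?_
  filter_upwards [Ioc_mem_nhdsGT one_pos] with δ hδ
  exact abs_inner_le_of_bounded hT hκsupp hfint hgint hx hy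
    (aestronglyMeasurable_balancingWeight hfint.1 hgint.1 δ) hδ.1
    fun t => balancingWeight_mem_Icc hδ.1 hδ.2 _ _
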